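/- Define functions F_k : ℝ → ℝ recursively by F₀(λ) = 2/(e^λ − e^{−λ}) and F_{k+1}(λ) = deriv (deriv F_k) λ − (2k+1)² · F_k(λ). Then for every natural number d and every real λ ≠ 0, F_d(λ) = 2^{2d+1} · (2d)! / (e^λ − e^{−λ})^{2d+1}. -/

import Mathlib

/-!
Since `e^λ - e^{-λ} = 2 sinh λ`, the claim is `F_d = (2d)! · sinh^{-(2d+1)}` away from `0`.
Because `cosh² = sinh² + 1`, one has `(d²/dλ² - n²) sinh^n = n(n-1) sinh^{n-2}` for every integer
`n`, and for `n = -(2d+1)` the factor `n(n-1) = (2d+1)(2d+2)` is what turns `(2d)!` into `(2d+2)!`.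
-/

open Real Filter Topology

lemma hasDerivAt_sinh_zpow (n : ℤ) {x : ℝ} (hx : x ≠ 0) :
    HasDerivAt (fun y => sinh y ^ n) (n * sinh x ^ (n - 1) * cosh x) x :=
  (hasDerivAt_zpow n (sinh x) (Or.inl (sinh_ne_zero.2 hx))).comp x (hasDerivAt_sinh x)

lemma deriv_deriv_sinh_zpow (n : ℤ) {x : ℝ} (hx : x ≠ 0) :
    deriv (deriv fun y => sinh y ^ n) x = n ^ 2 * sinh x ^ n + n * (n - 1) * sinh x ^ (n - 2) := by
  have hderiv : deriv (fun y => sinh y ^ n) =ᶠ[𝓝 x] fun y => n * sinh y ^ (n - 1) * cosh y := by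
    filter_upwards [isOpen_ne.mem_nhds hx] with y hy using (hasDerivAt_sinh_zpow n hy).deriv
  have hsecond : HasDerivAt (fun y => n * sinh y ^ (n - 1) * cosh y) _ x :=
    ((hasDerivAt_sinh_zpow (n - 1) hx).const_mul (n : ℝ)).mul (hasDerivAt_cosh x)
  have hs : sinh x ≠ 0 := sinh_ne_zero.2 hx
  rw [hderiv.deriv_eq, hsecond.deriv, show n - 1 - 1 = n - 2 by ring, zpow_sub_one₀ hs,
    zpow_sub₀ hs]
  push_cast
  field_simp
  rw [cosh_sq]
  ring

lemma exp_sub_exp_neg (x : ℝ) : exp x - exp (-x) = 2 * sinh x := by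
  rw [sinh_eq]; ring

theorem iterated_second_order_operators_on_csch
    (F : ℕ → ℝ → ℝ)
    (h0 : ∀ l : ℝ, F 0 l = 2 / (Real.exp l - Real.exp (-l)))
    (hsucc : ∀ k : ℕ, ∀ l : ℝ,
      F (k + 1) l = deriv (deriv (F k)) l - (2 * (k : ℝ) + 1) ^ 2 * F k l) :
    ∀ d : ℕ, ∀ l : ℝ, l ≠ 0 →
      F d l = 2 ^ (2 * d + 1) * (Nat.factorial (2 * d) : ℝ) /
        (Real.exp l - Real.exp (-l)) ^ (2 * d + 1) := by
  suffices hF : ∀ d : ℕ, ∀ l : ℝ, l ≠ 0 →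
      F d l = (2 * d).factorial * sinh l ^ (-((2 * d + 1 : ℕ) : ℤ)) by
    intro d l hl
    rw [hF d l hl, exp_sub_exp_neg, mul_pow, zpow_neg, zpow_natCast]
    field_simp
  intro d
  induction d with
  | zero =>
    intro l _
    rw [h0, exp_sub_exp_neg, div_mul_cancel_left₀ two_ne_zero]
    simp
  | succ d ih =>
    intro l hl
    have hlocal : F d =ᶠ[𝓝 l] fun y => (2 * d).factorial * sinh y ^ (-((2 * d + 1 : ℕ) : ℤ)) := by
      filter_upwards [isOpen_ne.mem_nhds hl] with y hy using ih y hy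
    rw [hsucc, hlocal.deriv.deriv_eq]
    simp only [deriv_const_mul_field']
    rw [deriv_deriv_sinh_zpow _ hl, ih l hl, show 2 * (d + 1) = 2 * d + 1 + 1 by ring,
      Nat.factorial_succ, Nat.factorial_succ]
    push_cast
    ring_nf
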